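/- Let Z be a normal space, let F = {F_i}_{i∈I} be a closed family combinatorially refining an open family U = {U_i}_{i∈I} of subsets of Z (i.e. F_i ⊂ U_i for all i). If F is locally finite and I is countable, then there exists an open family G = {G_i}_{i∈I} with F_i ⊂ G_i ⊂ cl(G_i) ⊂ U_i for every i ∈ I, such that for every finite K ⊂ I the intersection ∩_{i∈K} G_i is nonempty if and only if ∩_{i∈K} F_i is nonempty (i.e. the nerves of F and G are equal). -/

import Mathlib

/-!
Enumerate the index set and swell the sets `F i` one at a time. At each stage the family
consists of the swellings `closure (G j)` already built and the original `F j` for the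
remaining indices; it is still closed and locally finite, so the union of its finite
intersections that miss the current set `F i` is closed. Normality gives an open `G i ⊇ F i`
whose closure lies in `U i` and avoids that union, and then replacing `F i` by `closure (G i)`
creates no new simplex of the nerve. Every finite set of indices is settled after finitely
many stages.
-/

open Set Function

section NerveSwelling

variable {Z I : Type*}

/-- Unlike the simplicial complex, this contains `∅` as soon as `Z` is nonempty. -/
def nerve (D : I → Set Z) : Set (Finset I) :=
  {K | (⋂ j ∈ K, D j).Nonempty}

theorem nerve_mono {D D' : I → Set Z} (h : ∀ j, D j ⊆ D' j) : nerve D ⊆ nerve D' :=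
  fun _ hK => hK.mono (iInter₂_mono fun j _ => h j)

theorem nerve_subset_of_forall_ne {D D' : I → Set Z} {i : I} (hD' : ∀ j ≠ i, D' j = D j)
    (h : ∀ K : Finset I, (D' i ∩ ⋂ j ∈ K, D j).Nonempty → (D i ∩ ⋂ j ∈ K, D j).Nonempty) :
    nerve D' ⊆ nerve D := by
  classical
  intro K ⟨x, hx⟩
  have hx' : x ∈ ⋂ j ∈ K.erase i, D j :=
    mem_iInter₂.2 fun j hj => hD' j (Finset.ne_of_mem_erase hj) ▸ mem_iInter₂.1 hx j
      (Finset.mem_of_mem_erase hj)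
  by_cases hi : i ∈ K
  · have hK : ⋂ j ∈ K, D j = D i ∩ ⋂ j ∈ K.erase i, D j := by
      rw [← Finset.set_biInter_insert, Finset.insert_erase hi]
    show (⋂ j ∈ K, D j).Nonempty
    exact hK ▸ h _ ⟨x, mem_iInter₂.1 hx i hi, hx'⟩
  · exact ⟨x, by rwa [Finset.erase_eq_of_notMem hi] at hx'⟩

variable [TopologicalSpace Z]

theorem LocallyFinite.finset_biInter {D : I → Set Z} (hD : LocallyFinite D) :
    LocallyFinite fun K : Finset I => ⋂ j ∈ K, D j := by
  intro x
  obtain ⟨N, hN, hfin⟩ := hD x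
  refine ⟨N, hN, (hfin.finite_subsets.preimage Finset.coe_injective.injOn).subset ?_⟩
  rintro K ⟨y, hyK, hyN⟩ j hj
  exact ⟨y, mem_iInter₂.1 hyK j hj, hyN⟩

theorem LocallyFinite.isClosed_biUnion_finset_biInter {D : I → Set Z} (hD : LocallyFinite D)
    (hDc : ∀ j, IsClosed (D j)) (𝒦 : Set (Finset I)) :
    IsClosed (⋃ K ∈ 𝒦, ⋂ j ∈ K, D j) := by
  rw [biUnion_eq_iUnion]
  exact (hD.finset_biInter.comp_injective Subtype.val_injective).isClosed_iUnion
    fun K => isClosed_biInter fun j _ => hDc j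

theorem LocallyFinite.of_forall_notMem_eq {f g : I → Set Z} (hf : LocallyFinite f) {s : Set I}
    (hs : s.Finite) (hg : ∀ j ∉ s, g j = f j) : LocallyFinite g := by
  intro x
  obtain ⟨N, hN, hfin⟩ := hf x
  refine ⟨N, hN, (hs.union hfin).subset fun j hj => ?_⟩
  by_cases hjs : j ∈ s
  · exact Or.inl hjs
  · exact Or.inr (show (f j ∩ N).Nonempty from hg j hjs ▸ hj)

theorem exists_open_swelling_forall_nonempty_inter [NormalSpace Z] {D : I → Set Z}
    (hDc : ∀ j, IsClosed (D j)) (hD : LocallyFinite D) {i : I} {U : Set Z} (hU : IsOpen U)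
    (hDU : D i ⊆ U) :
    ∃ V, IsOpen V ∧ D i ⊆ V ∧ closure V ⊆ U ∧
      ∀ K : Finset I, (closure V ∩ ⋂ j ∈ K, D j).Nonempty → (D i ∩ ⋂ j ∈ K, D j).Nonempty := by
  set B := ⋃ K ∈ {K : Finset I | D i ∩ ⋂ j ∈ K, D j = ∅}, ⋂ j ∈ K, D j
  have hDB : D i ⊆ Bᶜ := fun x hx hxB => by
    obtain ⟨K, hK, hxK⟩ := mem_iUnion₂.1 hxB
    exact eq_empty_iff_forall_notMem.1 hK x ⟨hx, hxK⟩
  obtain ⟨V, hVo, hDV, hVUB⟩ := normal_exists_closure_subset (hDc i)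
    (hU.inter (hD.isClosed_biUnion_finset_biInter hDc _).isOpen_compl) (subset_inter hDU hDB)
  refine ⟨V, hVo, hDV, hVUB.trans inter_subset_left, fun K ⟨x, hxV, hxK⟩ => ?_⟩
  by_contra hK
  exact (hVUB hxV).2 (mem_biUnion (not_nonempty_iff_eq_empty.1 hK) hxK)

section Stages

variable (F U : I → Set Z) (e : I → ℕ)

def IsNerveSwelling (D : I → Set Z) (i : I) (V : Set Z) : Prop :=
  IsOpen V ∧ D i ⊆ V ∧ closure V ⊆ U i ∧
    ∀ K : Finset I, (closure V ∩ ⋂ j ∈ K, D j).Nonempty → (D i ∩ ⋂ j ∈ K, D j).Nonempty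

noncomputable def swellingStage : ℕ → I → Set Z
  | 0 => F
  | n + 1 => fun j =>
    if e j = n then closure (Classical.epsilon (IsNerveSwelling U (swellingStage n) j))
    else swellingStage n j

noncomputable def nerveSwelling (j : I) : Set Z :=
  Classical.epsilon (IsNerveSwelling U (swellingStage F U e (e j)) j)

variable {F U e}

theorem swellingStage_of_le {n : ℕ} {j : I} (h : n ≤ e j) : swellingStage F U e n j = F j := by
  induction n with
  | zero => rfl
  | succ n ih => simp only [swellingStage, if_neg (by omega : e j ≠ n), ih (by omega)]

theorem swellingStage_of_lt {n : ℕ} {j : I} (h : e j < n) :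
    swellingStage F U e n j = closure (nerveSwelling F U e j) := by
  induction n with
  | zero => omega
  | succ n ih =>
    rcases (Nat.lt_succ_iff.1 h).eq_or_lt with hjn | hjn
    · simp only [swellingStage, nerveSwelling, hjn, if_true]
    · simp only [swellingStage, if_neg hjn.ne, ih hjn]

theorem isClosed_swellingStage (hFc : ∀ i, IsClosed (F i)) (n : ℕ) (j : I) :
    IsClosed (swellingStage F U e n j) := by
  rcases lt_or_ge (e j) n with h | h
  · rw [swellingStage_of_lt h]
    exact isClosed_closure
  · rw [swellingStage_of_le h]
    exact hFc j

theorem locallyFinite_swellingStage (hFlf : LocallyFinite F) (he : Injective e) (n : ℕ) :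
    LocallyFinite (swellingStage F U e n) :=
  hFlf.of_forall_notMem_eq ((finite_Iio n).preimage he.injOn) fun _ hj =>
    swellingStage_of_le (not_lt.1 hj)

theorem isNerveSwelling_nerveSwelling [NormalSpace Z] (hFc : ∀ i, IsClosed (F i))
    (hUo : ∀ i, IsOpen (U i)) (hFU : ∀ i, F i ⊆ U i) (hFlf : LocallyFinite F)
    (he : Injective e) (i : I) :
    IsNerveSwelling U (swellingStage F U e (e i)) i (nerveSwelling F U e i) := by
  have hi : swellingStage F U e (e i) i = F i := swellingStage_of_le le_rfl
  exact Classical.epsilon_spec <| exists_open_swelling_forall_nonempty_inter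
    (isClosed_swellingStage hFc _) (locallyFinite_swellingStage hFlf he _) (hUo i) (hi ▸ hFU i)

theorem nerve_swellingStage_subset [NormalSpace Z] (hFc : ∀ i, IsClosed (F i))
    (hUo : ∀ i, IsOpen (U i)) (hFU : ∀ i, F i ⊆ U i) (hFlf : LocallyFinite F)
    (he : Injective e) (n : ℕ) :
    nerve (swellingStage F U e n) ⊆ nerve F := by
  induction n with
  | zero => exact subset_rfl
  | succ n ih =>
    refine Subset.trans ?_ ih
    by_cases hn : ∃ i, e i = n
    · obtain ⟨i, rfl⟩ := hn
      have hS := (isNerveSwelling_nerveSwelling hFc hUo hFU hFlf he i).2.2.2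
      refine nerve_subset_of_forall_ne (i := i) (fun j hj => ?_) ?_
      · simp only [swellingStage, if_neg (he.ne hj)]
      · rwa [swellingStage_of_lt (Nat.lt_succ_self _)]
    · have : swellingStage F U e (n + 1) = swellingStage F U e n := by
        ext j : 1
        simp only [swellingStage, if_neg fun h => hn ⟨j, h⟩]
      rw [this]

end Stages

end NerveSwelling

theorem exists_open_swelling_same_nerve_of_countable
    {Z : Type*} [TopologicalSpace Z] [NormalSpace Z] {I : Type*} [Countable I]
    (F U : I → Set Z) (hFc : ∀ i, IsClosed (F i)) (hUo : ∀ i, IsOpen (U i))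
    (hFU : ∀ i, F i ⊆ U i) (hFlf : LocallyFinite F) :
    ∃ G : I → Set Z, (∀ i, IsOpen (G i)) ∧
      (∀ i, F i ⊆ G i) ∧ (∀ i, closure (G i) ⊆ U i) ∧
      ∀ K : Finset I, (⋂ i ∈ K, G i).Nonempty ↔ (⋂ i ∈ K, F i).Nonempty := by
  obtain ⟨e, he⟩ := exists_injective_nat I
  have hG := isNerveSwelling_nerveSwelling hFc hUo hFU hFlf he
  have hFG : ∀ i, F i ⊆ nerveSwelling F U e i := fun i =>
    (swellingStage_of_le le_rfl).superset.trans (hG i).2.1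
  refine ⟨nerveSwelling F U e, fun i => (hG i).1, hFG, fun i => (hG i).2.2.1, fun K =>
    ⟨fun hK => ?_, fun hK => nerve_mono hFG hK⟩⟩
  have hlt : ∀ j ∈ K, e j < K.sup e + 1 := fun j hj => Nat.lt_succ_of_le (Finset.le_sup hj)
  refine nerve_swellingStage_subset hFc hUo hFU hFlf he (K.sup e + 1) (hK.mono ?_)
  exact iInter₂_mono fun j hj => subset_closure.trans (swellingStage_of_lt (hlt j hj)).superset
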